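/- arXiv:math/0504105 — 2 statements merged into one kernel-verified Lean document; each statement's English description precedes it below -/
import Mathlib

section
/- Let F be the free group of rank k ≥ 2 with free basis A, let φ : F → Aut(X) be a free simplicial action of F on a simplicial tree X, and let μ ≥ 0. Suppose there exists an exponentially CR-generic set S ⊆ CR such that ||w||_X/||w|| ≥ μ for every w ∈ S. Then the generic stretching factor satisfies λ(φ) ≥ μ. -/
open MeasureTheory Filter Topology
open scoped ENNReal

noncomputable section

/-- The hyperbolic boundary of the free group on `α`: semi-infinite freely reduced
words over `α^{±1}` (a letter is a pair `(a, b) : α × Bool`, whose inverse is `(a, !b)`). -/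
abbrev FGBoundary (α : Type*) : Type _ :=
  { x : ℕ → α × Bool // ∀ i, x (i + 1) ≠ ((x i).1, !(x i).2) }

instance fgBoundaryMeasurableSpace (α : Type*) : MeasurableSpace (FGBoundary α) :=
  MeasurableSpace.comap (fun ω => ω.1)
    (@MeasurableSpace.pi ℕ (fun _ => α × Bool) fun _ => ⊤)

/-- The prefix of length `n` of a boundary point, as an element of the free group. -/
def bprefix {α : Type*} (ω : FGBoundary α) (n : ℕ) : FreeGroup α :=
  FreeGroup.mk (List.ofFn fun i : Fin n => ω.1 i)

/-- The freely reduced length of an element of a free group. -/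
def wlen {α : Type*} (v : FreeGroup α) : ℕ :=
  sInf { n | ∃ L : List (α × Bool), L.length = n ∧ FreeGroup.mk L = v }

/-- `m` is the uniform measure on the boundary of the free group of rank `r`:
a Borel probability measure assigning to the cylinder over each nontrivial `v` the
mass `1/(2r(2r-1)^{|v|-1})`. -/
def IsUniformBoundaryMeasure {α : Type*} (r : ℕ) (m : Measure (FGBoundary α)) : Prop :=
  IsProbabilityMeasure m ∧
    ∀ v : FreeGroup α, v ≠ 1 →
      m { ω : FGBoundary α | bprefix ω (wlen v) = v } =
        1 / ((2 * r * (2 * r - 1) ^ (wlen v - 1) : ℕ) : ℝ≥0∞)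

/-- The cyclically reduced length: the minimal length in the conjugacy class. -/
def cyclen {α : Type*} (w : FreeGroup α) : ℕ :=
  sInf (Set.range fun g : FreeGroup α => wlen (g⁻¹ * w * g))

/-- The set of cyclically reduced elements. -/
def CR (α : Type*) : Set (FreeGroup α) := { w | wlen w = cyclen w }

/-- The number of elements of `S` of length `n`. -/
def sphCount {α : Type*} (S : Set (FreeGroup α)) (n : ℕ) : ℕ :=
  Set.ncard { w ∈ S | wlen w = n }

/-- `S ⊆ W` is exponentially `W`-generic. -/
def ExpGeneric {α : Type*} (W S : Set (FreeGroup α)) : Prop :=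
  S ⊆ W ∧ ∃ D : ℝ, 0 < D ∧ ∃ σ : ℝ, 0 < σ ∧ σ < 1 ∧
    ∀ n : ℕ, 1 ≤ n → |((sphCount S n : ℝ) / (sphCount W n : ℝ)) - 1| ≤ D * σ ^ n

/-- Translation length of `φ w` on the graph `X`. -/
def translen {V : Type*} {k : ℕ} (X : SimpleGraph V)
    (φ : FreeGroup (Fin k) →* Equiv.Perm V) (w : FreeGroup (Fin k)) : ℕ :=
  sInf (Set.range fun v : V => X.dist v (φ w v))

/-- `φ` is a relabeling automorphism: induced by a permutation of `A^{±1}`. -/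
def IsRelabeling {k : ℕ} (φ : MulAut (FreeGroup (Fin k))) : Prop :=
  ∃ σ : Equiv.Perm (Fin k), ∃ b : Fin k → Bool,
    ∀ i : Fin k, φ (FreeGroup.of i) =
      if b i then (FreeGroup.of (σ i))⁻¹ else FreeGroup.of (σ i)

/-- `φ` is an inner automorphism. -/
def IsInnerAut {G : Type*} [Group G] (φ : MulAut G) : Prop :=
  ∃ g : G, ∀ x : G, φ x = g * x * g⁻¹

/-- `φ` is simple: a composition of a relabeling automorphism and an inner automorphism. -/
def IsSimpleAut {k : ℕ} (φ : MulAut (FreeGroup (Fin k))) : Prop :=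
  ∃ τ ι : MulAut (FreeGroup (Fin k)), IsRelabeling τ ∧ IsInnerAut ι ∧ φ = τ * ι

/-- Word length with respect to a generating set `S` (letters from `S ∪ S⁻¹`). -/
def wordLength {G : Type*} [Group G] (S : Set G) (g : G) : ℕ :=
  sInf { n | ∃ l : List G, l.length = n ∧ (∀ x ∈ l, x ∈ S ∨ x⁻¹ ∈ S) ∧ l.prod = g }

/-- The norm `‖φ‖_S = max_{s ∈ S} |φ(s)|_S` of an automorphism. -/
def autNorm {G : Type*} [Group G] (S : Finset G) (φ : MulAut G) : ℕ :=
  S.sup fun s => wordLength (S : Set G) (φ s)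

/-- Amenability: existence of a left-invariant finitely additive probability
measure defined on all subsets. -/
def IsAmenable (G : Type*) [Group G] : Prop :=
  ∃ μ : Set G → ℝ, (∀ A : Set G, 0 ≤ μ A) ∧ μ Set.univ = 1 ∧
    (∀ A B : Set G, Disjoint A B → μ (A ∪ B) = μ A + μ B) ∧
    ∀ (g : G) (A : Set G), μ ((g * ·) '' A) = μ A

/-- The homomorphism `Aut(G) → Aut(G_ab)` induced by abelianization. -/
def abAutHom (G : Type*) [Group G] : MulAut G →* MulAut (Abelianization G) where
  toFun e := MulEquiv.abelianizationCongr e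
  map_one' := by
    apply MulEquiv.toMonoidHom_injective
    apply Abelianization.hom_ext
    ext z
    simp [abelianizationCongr_of]
  map_mul' a b := by
    apply MulEquiv.toMonoidHom_injective
    apply Abelianization.hom_ext
    ext z
    simp [abelianizationCongr_of]


section AuxLemmas
open FreeGroup

variable {α : Type*} [DecidableEq α]

/-- A word with no adjacent cancelling pair. -/
abbrev RedWord (L : List (α × Bool)) : Prop :=
  List.Chain' (fun a b => b ≠ (a.1, !a.2)) L

theorem reduce_eq_self_of_redword {L : List (α × Bool)} (h : RedWord L) :
    reduce L = L := by
  induction L with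
  | nil => rfl
  | cons x L ih =>
    have hL : RedWord L := h.tail
    rw [reduce.cons, ih hL]
    cases L with
    | nil => rfl
    | cons y t =>
      have hxy : y ≠ (x.1, !x.2) := List.isChain_cons_cons.1 h |>.1
      have : ¬ (x.1 = y.1 ∧ x.2 = !y.2) := by
        rintro ⟨h1, h2⟩
        apply hxy
        ext <;> simp [h1, h2]
      simp [this]

theorem toWord_mk_of_redword {L : List (α × Bool)} (h : RedWord L) :
    (FreeGroup.mk L).toWord = L := by
  rw [toWord_mk, reduce_eq_self_of_redword h]

theorem wlen_eq_norm (v : FreeGroup α) : wlen v = norm v := by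
  apply le_antisymm
  · exact Nat.sInf_le ⟨v.toWord, rfl, mk_toWord⟩
  · have hne : { n | ∃ L : List (α × Bool), L.length = n ∧ FreeGroup.mk L = v }.Nonempty :=
      ⟨FreeGroup.norm v, v.toWord, rfl, mk_toWord⟩
    apply le_csInf hne
    rintro n ⟨L, hL, rfl⟩
    simpa [hL] using norm_mk_le (L₁ := L)

theorem wlen_mk_of_redword {L : List (α × Bool)} (h : RedWord L) :
    wlen (FreeGroup.mk L) = L.length := by
  rw [wlen_eq_norm]
  show (FreeGroup.mk L).toWord.length = L.length
  rw [toWord_mk_of_redword h]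

theorem wlen_mul_le (x y : FreeGroup α) : wlen (x * y) ≤ wlen x + wlen y := by
  simp only [wlen_eq_norm]; exact norm_mul_le x y

theorem wlen_inv (x : FreeGroup α) : wlen x⁻¹ = wlen x := by
  simp only [wlen_eq_norm]; exact norm_inv_eq

theorem wlen_pow_le (x : FreeGroup α) (m : ℕ) : wlen (x ^ m) ≤ m * wlen x := by
  induction m with
  | zero => simp [wlen_eq_norm]
  | succ m ih =>
    calc wlen (x ^ (m+1)) = wlen (x ^ m * x) := by rw [pow_succ]
    _ ≤ wlen (x^m) + wlen x := wlen_mul_le _ _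
    _ ≤ m * wlen x + wlen x := by omega
    _ = (m+1) * wlen x := by ring

/-- A cyclically reduced word: reduced and ends don't cancel. -/
def CycRedWord (L : List (α × Bool)) : Prop :=
  RedWord L ∧ ∀ x ∈ L.getLast?, ∀ y ∈ L.head?, y ≠ (x.1, !x.2)

theorem flatten_replicate_redword {L : List (α × Bool)} (h : CycRedWord L) (m : ℕ) :
    RedWord ((List.replicate m L).flatten) ∧
    ((List.replicate m L).flatten).head? = (if m = 0 then none else L.head?) ∧
    ((List.replicate m L).flatten).getLast? = (if m = 0 then none else L.getLast?) := by
  induction m with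
  | zero => simp [RedWord, List.Chain']
  | succ m ih =>
    rw [List.replicate_succ, List.flatten_cons]
    obtain ⟨ih1, ih2, ih3⟩ := ih
    have happ : RedWord (L ++ (List.replicate m L).flatten) := by
      refine List.isChain_append.mpr ⟨h.1, ih1, ?_⟩
      intro x hx y hy
      rw [ih2] at hy
      by_cases hm : m = 0
      · simp [hm] at hy
      · rw [if_neg hm] at hy
        exact h.2 x hx y hy
    refine ⟨happ, ?_, ?_⟩
    · by_cases hL : L = []
      · subst hL; simpa using ⟨ih2, ih3⟩
      · rw [if_neg (Nat.succ_ne_zero m), List.head?_append_of_ne_nil _ hL]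
    · by_cases hF : (List.replicate m L).flatten = []
      · rw [hF, List.append_nil, if_neg (Nat.succ_ne_zero m)]
      · have hm : m ≠ 0 := by rintro rfl; simp at hF
        rw [List.getLast?_append_of_ne_nil _ hF, ih3, if_neg (Nat.succ_ne_zero m), if_neg hm]

theorem wlen_pow_of_cycred {L : List (α × Bool)} (h : CycRedWord L) (m : ℕ) :
    wlen (FreeGroup.mk L ^ m) = m * L.length := by
  have hmk : FreeGroup.mk L ^ m = FreeGroup.mk ((List.replicate m L).flatten) := by
    induction m with
    | zero =>
      simp only [pow_zero, List.replicate_zero, List.flatten_nil]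
      exact FreeGroup.one_eq_mk
    | succ m ih =>
      rw [pow_succ', ih, List.replicate_succ, List.flatten_cons, mul_mk]
  rw [hmk, wlen_mk_of_redword (flatten_replicate_redword h m).1]
  simp [List.length_flatten]

theorem cyclen_eq_of_cycred {L : List (α × Bool)} (h : CycRedWord L) :
    cyclen (FreeGroup.mk L) = L.length := by
  set w := FreeGroup.mk L
  have hw : wlen w = L.length := wlen_mk_of_redword h.1
  apply le_antisymm
  · refine le_trans (Nat.sInf_le ⟨1, rfl⟩) ?_
    simp [hw]
  · have hne : (Set.range fun g : FreeGroup α => wlen (g⁻¹ * w * g)).Nonempty := ⟨wlen w, 1, by simp⟩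
    apply le_csInf hne
    rintro c ⟨g, rfl⟩
    by_contra hcon
    push_neg at hcon
    have key : ∀ m : ℕ, m * L.length ≤ 2 * wlen g + m * wlen (g⁻¹ * w * g) := by
      intro m
      have h1 : w ^ m = g * (g⁻¹ * w * g) ^ m * g⁻¹ := by
        rw [show g⁻¹ * w * g = g⁻¹ * w * (g⁻¹)⁻¹ by rw [inv_inv], conj_pow]; group
      have h2 := wlen_mul_le (g * (g⁻¹ * w * g) ^ m) g⁻¹
      have h3 := wlen_mul_le g ((g⁻¹ * w * g) ^ m)
      have h4 := wlen_pow_le (g⁻¹ * w * g) m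
      have h5 := wlen_inv g
      have h6 : wlen (w ^ m) = m * L.length := wlen_pow_of_cycred h m
      rw [h1] at h6
      nlinarith
    have hk := key (2 * wlen g + 1)
    have hm := Nat.mul_le_mul_left (2 * wlen g + 1) (Nat.succ_le_of_lt hcon)
    nlinarith




section AuxCounting
variable {k : ℕ} (hk : 2 ≤ k)

/-- Letters as `Fin (2*k)`. -/
def lE : Fin k × Bool ≃ Fin (2 * k) :=
  ((Equiv.prodCongr (Equiv.refl (Fin k)) finTwoEquiv.symm).trans finProdFinEquiv).trans
    (finCongr (by ring))

def linv {α : Type*} (x : α × Bool) : α × Bool := (x.1, !x.2)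

lemma mod_add_ne {a b n : ℕ} (ha : a < n) (hb : 0 < b) (hb2 : b < n) :
    (a + b) % n ≠ a := by
  intro h
  rcases Nat.lt_or_ge (a + b) n with h1 | h1
  · rw [Nat.mod_eq_of_lt h1] at h; omega
  · rw [Nat.mod_eq_sub_mod h1, Nat.mod_eq_of_lt (by omega)] at h; omega

/-- The `j`-th letter different from `(linv x)`. -/
def nxt (x : Fin k × Bool) (j : Fin (2 * k - 1)) : Fin k × Bool :=
  lE.symm ⟨((lE (linv x)).val + 1 + j.val) % (2 * k), Nat.mod_lt _ (by omega)⟩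

lemma nxt_ne (x : Fin k × Bool) (j : Fin (2 * k - 1)) : nxt hk x j ≠ linv x := by
  intro h
  have h2 := congrArg (fun y => (lE y).val) h
  simp only [nxt, Equiv.apply_symm_apply] at h2
  have hb : 0 < 1 + j.val := by omega
  have hb2 : 1 + j.val < 2 * k := by have := j.2; omega
  exact mod_add_ne (lE (linv x)).2 hb hb2 (by rw [← add_assoc]; exact h2)

lemma nxt_inj (x : Fin k × Bool) {j j' : Fin (2 * k - 1)}
    (h : nxt hk x j = nxt hk x j') : j = j' := by
  have h2 := congrArg (fun y => (lE y).val) h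
  simp only [nxt, Equiv.apply_symm_apply] at h2
  have hmod : ((lE (linv x)).val + 1) + j.val ≡ ((lE (linv x)).val + 1) + j'.val [MOD 2 * k] := by
    have := j.2; have := j'.2
    simpa [Nat.ModEq, add_assoc] using h2
  have := (Nat.ModEq.add_left_cancel' _ hmod)
  have hj := j.2; have hj' := j'.2
  have : j.val % (2 * k) = j'.val % (2 * k) := this
  rw [Nat.mod_eq_of_lt (by omega), Nat.mod_eq_of_lt (by omega)] at this
  exact Fin.ext this

/-- A canonical letter different from `linv x` and from `(0, true)`. -/
def lastL (x : Fin k × Bool) : Fin k × Bool :=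
  if nxt hk x ⟨0, by omega⟩ ≠ ((⟨0, by omega⟩ : Fin k), true) then nxt hk x ⟨0, by omega⟩
  else nxt hk x ⟨1, by omega⟩

lemma lastL_ne_linv (x : Fin k × Bool) : lastL hk x ≠ linv x := by
  unfold lastL; split_ifs <;> apply nxt_ne

lemma lastL_ne_bad (x : Fin k × Bool) :
    lastL hk x ≠ ((⟨0, by omega⟩ : Fin k), true) := by
  unfold lastL
  split_ifs with h
  · exact h
  · push_neg at h
    rw [← h]
    intro hc
    have := nxt_inj hk x hc
    simp [Fin.ext_iff] at this
end AuxCounting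

section Counting2
variable {k : ℕ}

def letters (hk : 2 ≤ k) (f : ℕ → Fin (2 * k - 1)) : ℕ → Fin k × Bool
  | 0 => (⟨0, by omega⟩, false)
  | (t + 1) => nxt hk (letters hk f t) (f t)

def cword (hk : 2 ≤ k) (f : ℕ → Fin (2 * k - 1)) (n : ℕ) : List (Fin k × Bool) :=
  (List.ofFn fun i : Fin (n - 1) => letters hk f i) ++ [lastL hk (letters hk f (n - 2))]

lemma cword_length (hk : 2 ≤ k) (f : ℕ → Fin (2 * k - 1)) {n : ℕ} (hn : 2 ≤ n) :
    (cword hk f n).length = n := by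
  simp [cword]; omega

lemma getLast?_ofFn_word (hk : 2 ≤ k) (f : ℕ → Fin (2 * k - 1)) {n : ℕ} (hn : 2 ≤ n) :
    (List.ofFn fun i : Fin (n - 1) => letters hk f i).getLast? =
      some (letters hk f (n - 2)) := by
  rw [List.getLast?_eq_getElem?, List.getElem?_ofFn]
  simp only [List.length_ofFn]
  have h2 : n - 1 - 1 < n - 1 := by omega
  simp [List.ofFnNthVal, h2]
  congr 1

lemma cword_cycred (hk : 2 ≤ k) (f : ℕ → Fin (2 * k - 1)) {n : ℕ} (hn : 2 ≤ n) :
    CycRedWord (cword hk f n) := by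
  constructor
  · refine List.isChain_append.mpr ⟨?_, ?_, ?_⟩
    · rw [List.isChain_ofFn]
      intro i hi
      show letters hk f (i + 1) ≠ linv (letters hk f i)
      exact nxt_ne hk _ _
    · simp
    · intro x hx y hy
      rw [getLast?_ofFn_word hk f hn] at hx
      simp at hx hy
      subst hx; subst hy
      exact lastL_ne_linv hk _
  · intro x hx y hy
    unfold cword at hx hy
    rw [List.getLast?_append_of_ne_nil _ (by simp)] at hx
    simp at hx
    rw [List.head?_append_of_ne_nil] at hy
    swap
    · intro hnil
      have := congrArg List.length hnil
      simp at this
      omega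
    rw [List.head?_eq_getElem?, List.getElem?_ofFn] at hy
    have h0 : 0 < n - 1 := by omega
    simp [List.ofFnNthVal, h0] at hy
    subst hx
    rw [← hy]
    show letters hk f 0 ≠ _
    intro hc
    have hbad := lastL_ne_bad hk (letters hk f (n - 2))
    apply hbad
    have h1 : (⟨0, by omega⟩ : Fin k) = (lastL hk (letters hk f (n - 2))).1 := congrArg Prod.fst hc
    have h2 : false = !(lastL hk (letters hk f (n - 2))).2 := congrArg Prod.snd hc
    have hx2 : (lastL hk (letters hk f (n - 2))).2 = true := by
      cases hb : (lastL hk (letters hk f (n - 2))).2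
      · rw [hb] at h2; simp at h2
      · rfl
    exact Prod.ext h1.symm hx2

def pad (n : ℕ) (f : Fin (n - 2) → Fin (2 * k - 1)) (hk : 2 ≤ k) : ℕ → Fin (2 * k - 1) :=
  fun t => if h : t < n - 2 then f ⟨t, h⟩ else ⟨0, by omega⟩

def Θ (hk : 2 ≤ k) (n : ℕ) (f : Fin (n - 2) → Fin (2 * k - 1)) : FreeGroup (Fin k) :=
  FreeGroup.mk (cword hk (pad n f hk) n)

lemma theta_inj (hk : 2 ≤ k) {n : ℕ} (hn : 2 ≤ n) : Function.Injective (Θ hk n) := by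
  intro f g h
  unfold Θ at h
  have hw : cword hk (pad n f hk) n = cword hk (pad n g hk) n := by
    have h1 := congrArg FreeGroup.toWord h
    rwa [toWord_mk_of_redword (cword_cycred hk _ hn).1,
      toWord_mk_of_redword (cword_cycred hk _ hn).1] at h1
  unfold cword at hw
  have hlen : (List.ofFn fun i : Fin (n - 1) => letters hk (pad n f hk) i).length =
      (List.ofFn fun i : Fin (n - 1) => letters hk (pad n g hk) i).length := by simp
  obtain ⟨hofn, -⟩ := List.append_inj hw hlen
  have hlet : ∀ i : ℕ, i < n - 1 → letters hk (pad n f hk) i = letters hk (pad n g hk) i := by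
    intro i hi
    have := congrArg (fun L => L[i]?) hofn
    simpa [List.getElem?_ofFn, List.ofFnNthVal, hi] using this
  funext i
  have hi1 : (i : ℕ) < n - 2 := i.2
  have h1 : letters hk (pad n f hk) (i + 1) = letters hk (pad n g hk) (i + 1) :=
    hlet _ (by omega)
  have h2 : letters hk (pad n f hk) i = letters hk (pad n g hk) i := hlet _ (by omega)
  show f i = g i
  simp only [letters, h2] at h1
  have := nxt_inj hk _ h1
  have hpf : pad n f hk i = f i := by simp [pad, hi1]
  have hpg : pad n g hk i = g i := by simp [pad, hi1]
  rw [hpf, hpg] at this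
  exact this

lemma sph_finite {α : Type*} [DecidableEq α] [Finite α] (S : Set (FreeGroup α)) (n : ℕ) :
    { w ∈ S | wlen w = n }.Finite := by
  apply Set.Finite.subset (Set.finite_range fun F : Fin n → α × Bool => FreeGroup.mk (List.ofFn F))
  rintro w ⟨-, hw⟩
  have hlen : (FreeGroup.toWord w).length = n := by
    rw [← hw, wlen_eq_norm]; rfl
  refine ⟨fun i : Fin n => (FreeGroup.toWord w)[i.val]'(by omega), ?_⟩
  have : (List.ofFn fun i : Fin n => (FreeGroup.toWord w)[i.val]'(by omega)) = FreeGroup.toWord w := by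
    apply List.ext_getElem
    · simp [hlen]
    · intro i h1 h2
      simp
  show FreeGroup.mk (List.ofFn fun i : Fin n => (FreeGroup.toWord w)[i.val]'(by omega)) = w
  rw [this, mk_toWord]

lemma crCount_lb (hk : 2 ≤ k) {n : ℕ} (hn : 2 ≤ n) :
    (2 * k - 1) ^ (n - 2) ≤ sphCount (CR (Fin k)) n := by
  have hsub : Set.range (Θ hk n) ⊆ { w ∈ CR (Fin k) | wlen w = n } := by
    rintro w ⟨f, rfl⟩
    have hcr := cword_cycred hk (pad n f hk) hn
    have hwl : wlen (Θ hk n f) = n := by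
      rw [Θ, wlen_mk_of_redword hcr.1, cword_length hk _ hn]
    have hcl : cyclen (Θ hk n f) = n := by
      rw [Θ, cyclen_eq_of_cycred hcr, cword_length hk _ hn]
    exact ⟨by rw [CR, Set.mem_setOf_eq, hwl, hcl], hwl⟩
  have hfin : { w ∈ CR (Fin k) | wlen w = n }.Finite := sph_finite _ n
  calc (2 * k - 1) ^ (n - 2) = Fintype.card (Fin (n - 2) → Fin (2 * k - 1)) := by
        simp [Fintype.card_fun]
  _ = (Set.range (Θ hk n)).ncard := by
        rw [← Set.image_univ, Set.ncard_image_of_injective _ (theta_inj hk hn)]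
        simp [Set.ncard_univ]
  _ ≤ sphCount (CR (Fin k)) n := Set.ncard_le_ncard hsub hfin

end Counting2

section AuxMeas
open MeasureTheory
open scoped ENNReal
variable {α : Type*} [DecidableEq α]

lemma wlen_bprefix (ω : FGBoundary α) (n : ℕ) : wlen (bprefix ω n) = n := by
  rw [bprefix, wlen_mk_of_redword, List.length_ofFn]
  apply List.isChain_ofFn.mpr
  intro i hi
  exact ω.2 i

lemma measurableSet_bprefix [Countable α] (n : ℕ) (P : FreeGroup α → Prop) :
    MeasurableSet { ω : FGBoundary α | P (bprefix ω n) } := by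
  rw [fgBoundaryMeasurableSpace, MeasurableSpace.measurableSet_comap]
  classical
  refine ⟨⋃ (y : Fin n → α × Bool) (_ : P (FreeGroup.mk (List.ofFn y))),
      ⋂ i : Fin n, { x : ℕ → α × Bool | x (i : ℕ) = y i }, ?_, ?_⟩
  · apply MeasurableSet.iUnion
    intro y
    apply MeasurableSet.iUnion
    intro _
    apply MeasurableSet.iInter
    intro i
    have hme : @Measurable (ℕ → α × Bool) (α × Bool)
        (@MeasurableSpace.pi ℕ (fun _ => α × Bool) fun _ => ⊤) ⊤
        (fun x => x (i : ℕ)) := @measurable_pi_apply ℕ (fun _ => α × Bool) (fun _ => ⊤) (i : ℕ)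
    have heq : { x : ℕ → α × Bool | x (i : ℕ) = y i } = (fun x : ℕ → α × Bool => x (i : ℕ)) ⁻¹' {y i} := rfl
    rw [heq]
    exact hme (MeasurableSpace.measurableSet_top)
  · ext ω
    simp only [Set.mem_preimage, Set.mem_iUnion, Set.mem_iInter, Set.mem_setOf_eq]
    constructor
    · rintro ⟨y, hy, hcoord⟩
      have : (fun i : Fin n => ω.1 i) = y := funext fun i => hcoord i
      rwa [bprefix, this]
    · intro h
      exact ⟨fun i : Fin n => ω.1 i, h, fun i => rfl⟩

lemma measure_bprefix_mem [Finite α] {r : ℕ} {m : Measure (FGBoundary α)}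
    (hm : IsUniformBoundaryMeasure r m) (S : Set (FreeGroup α)) {n : ℕ} (hn : 1 ≤ n) :
    m { ω : FGBoundary α | bprefix ω n ∈ S } =
      (sphCount S n : ℝ≥0∞) * (1 / ((2 * r * (2 * r - 1) ^ (n - 1) : ℕ) : ℝ≥0∞)) := by
  classical
  have hT : { w ∈ S | wlen w = n }.Finite := sph_finite S n
  have hset : { ω : FGBoundary α | bprefix ω n ∈ S } =
      ⋃ w ∈ hT.toFinset, { ω : FGBoundary α | bprefix ω n = w } := by
    ext ω
    simp only [Set.mem_setOf_eq, Set.mem_iUnion, Set.Finite.mem_toFinset]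
    constructor
    · intro h
      exact ⟨bprefix ω n, ⟨⟨h, wlen_bprefix ω n⟩, rfl⟩⟩
    · rintro ⟨w, ⟨hw, -⟩, rfl⟩
      exact hw
  rw [hset, measure_biUnion_finset]
  · have hterm : ∀ w ∈ hT.toFinset,
        m { ω : FGBoundary α | bprefix ω n = w } =
          1 / ((2 * r * (2 * r - 1) ^ (n - 1) : ℕ) : ℝ≥0∞) := by
      intro w hw
      rw [Set.Finite.mem_toFinset] at hw
      obtain ⟨-, hwl⟩ := hw
      have hne : w ≠ 1 := by
        intro h1
        rw [h1] at hwl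
        have : wlen (1 : FreeGroup α) = 0 := by
          rw [wlen_eq_norm]; exact FreeGroup.norm_one
        omega
      have := hm.2 w hne
      rw [hwl] at this
      exact this
    rw [Finset.sum_congr rfl hterm, Finset.sum_const, nsmul_eq_mul]
    congr 1
    rw [sphCount, Set.ncard_eq_toFinset_card _ hT]
  · intro w hw w' hw' hne
    simp only [Function.onFun]
    apply Set.disjoint_left.mpr
    intro ω h1 h2
    exact hne (h1.symm.trans h2)
  · intro w hw
    exact measurableSet_bprefix n (· = w)

end AuxMeas

lemma ennreal_inv_le {a s b : ℕ} (ha : a ≠ 0) (hb : b ≠ 0) (h : b ≤ a * s) :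
    ((a : ℝ≥0∞))⁻¹ ≤ (s : ℝ≥0∞) * ((b : ℝ≥0∞))⁻¹ := by
  have hs : s ≠ 0 := by rintro rfl; simp at h; omega
  have h1 : ((b : ℕ) : ℝ≥0∞) ≤ ((a * s : ℕ) : ℝ≥0∞) := by exact_mod_cast h
  have h2 : (((a * s : ℕ) : ℝ≥0∞))⁻¹ ≤ ((b : ℝ≥0∞))⁻¹ := ENNReal.inv_le_inv.mpr h1
  have h3 : (((a * s : ℕ) : ℝ≥0∞))⁻¹ = ((a : ℝ≥0∞))⁻¹ * ((s : ℝ≥0∞))⁻¹ := by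
    push_cast
    exact ENNReal.mul_inv (Or.inl (by simpa using ha)) (Or.inr (by simpa using hs))
  have h4 : ((a : ℝ≥0∞))⁻¹ = (s : ℝ≥0∞) * (((a * s : ℕ) : ℝ≥0∞))⁻¹ := by
    rw [h3, ← mul_assoc, mul_comm (s : ℝ≥0∞), mul_assoc,
      ENNReal.mul_inv_cancel (by simpa using hs) (by simp), mul_one]
  rw [h4]
  exact mul_le_mul_right h2 _


end AuxLemmas

/-- a lower bound for the generic stretching factor from a generic set of
cyclically reduced words with large translation-length ratio. -/
theorem statement8 {k : ℕ} (hk : 2 ≤ k) {V : Type*}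
    (X : SimpleGraph V) (hX : X.IsTree)
    (φ : FreeGroup (Fin k) →* Equiv.Perm V)
    (hadj : ∀ (w : FreeGroup (Fin k)) (u v : V), X.Adj u v ↔ X.Adj (φ w u) (φ w v))
    (hfree : ∀ w : FreeGroup (Fin k), w ≠ 1 → ∀ v : V, φ w v ≠ v)
    (hinv : ∀ (w : FreeGroup (Fin k)) (u v : V), X.Adj u v → ¬(φ w u = v ∧ φ w v = u))
    (m : Measure (FGBoundary (Fin k))) (hm : IsUniformBoundaryMeasure k m)
    (x : V) (lam : ℝ)
    (hlam : ∀ᵐ ω ∂m, Tendsto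
      (fun n : ℕ => (X.dist x (φ (bprefix ω n) x) : ℝ) / n) atTop (𝓝 lam))
    (mu : ℝ) (hmu : 0 ≤ mu)
    (S : Set (FreeGroup (Fin k))) (hgen : ExpGeneric (CR (Fin k)) S)
    (hratio : ∀ w ∈ S, mu ≤ (translen X φ w : ℝ) / (cyclen w : ℝ)) :
    mu ≤ lam := by
  classical
  obtain ⟨hSCR, D, hD, σ, hσ0, hσ1, hbound⟩ := hgen
  -- choose N₀ such that D * σ ^ n ≤ 1/2 for n ≥ N₀
  have htend0 : Tendsto (fun n : ℕ => D * σ ^ n) atTop (𝓝 0) := by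
    have := tendsto_pow_atTop_nhds_zero_of_lt_one (le_of_lt hσ0) hσ1
    simpa using this.const_mul D
  obtain ⟨N₀, hN₀⟩ := eventually_atTop.mp
    (htend0.eventually (gt_mem_nhds (by norm_num : (0 : ℝ) < 1/2)))
  set c : ℝ≥0∞ := ((4 * k * (2 * k - 1) : ℕ) : ℝ≥0∞)⁻¹ with hc
  have hprob : IsProbabilityMeasure m := hm.1
  -- key counting bound
  have hSn : ∀ n : ℕ, N₀ ≤ n → 2 ≤ n → (2 * k - 1) ^ (n - 2) ≤ 2 * sphCount S n := by
    intro n hn1 hn2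
    have hCR := crCount_lb hk hn2
    have hb := hbound n (by omega)
    have hCRpos : 0 < sphCount (CR (Fin k)) n := by
      calc 0 < (2 * k - 1) ^ (n - 2) := Nat.pow_pos (by omega)
      _ ≤ _ := hCR
    have hb2 : |((sphCount S n : ℝ) / (sphCount (CR (Fin k)) n : ℝ)) - 1| ≤ 1/2 :=
      le_trans hb (le_of_lt (hN₀ n hn1))
    have habs := abs_le.mp hb2
    have hCRr : (0 : ℝ) < (sphCount (CR (Fin k)) n : ℝ) := by exact_mod_cast hCRpos
    have hratio2 : (1:ℝ)/2 ≤ (sphCount S n : ℝ) / (sphCount (CR (Fin k)) n : ℝ) := by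
      linarith [habs.1]
    have hSr : ((sphCount (CR (Fin k)) n : ℝ)) ≤ 2 * (sphCount S n : ℝ) := by
      have h5 := (le_div_iff₀ hCRr).mp hratio2
      linarith
    have : sphCount (CR (Fin k)) n ≤ 2 * sphCount S n := by exact_mod_cast hSr
    omega
  -- the events
  set A : ℕ → Set (FGBoundary (Fin k)) := fun n => { ω | bprefix ω n ∈ S } with hA
  have hAmeas : ∀ n, MeasurableSet (A n) := fun n => measurableSet_bprefix n (· ∈ S)
  have hAlow : ∀ n : ℕ, N₀ ≤ n → 2 ≤ n → c ≤ m (A n) := by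
    intro n hn1 hn2
    rw [hA]
    rw [measure_bprefix_mem hm S (by omega)]
    rw [one_div]
    apply le_trans _ (le_refl _)
    have hnum : 2 * k * (2 * k - 1) ^ (n - 1) ≤ (4 * k * (2 * k - 1)) * sphCount S n := by
      have h1 := hSn n hn1 hn2
      have h2 : (2 * k - 1) ^ (n - 1) = (2 * k - 1) ^ (n - 2) * (2 * k - 1) := by
        rw [← pow_succ]
        congr 1
        omega
      calc 2 * k * (2 * k - 1) ^ (n - 1)
          = (2 * k * (2 * k - 1)) * (2 * k - 1) ^ (n - 2) := by rw [h2]; ring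
      _ ≤ (2 * k * (2 * k - 1)) * (2 * sphCount S n) := by
          exact Nat.mul_le_mul_left _ h1
      _ = (4 * k * (2 * k - 1)) * sphCount S n := by ring
    exact ennreal_inv_le (Nat.mul_ne_zero (by omega) (by omega))
      (Nat.mul_ne_zero (by omega) (pow_ne_zero _ (by omega))) hnum
  -- the tail intersection
  set U : ℕ → Set (FGBoundary (Fin k)) := fun N => ⋃ n, ⋃ (_ : N ≤ n), A n with hU
  have hUmeas : ∀ N, MeasurableSet (U N) := fun N =>
    MeasurableSet.iUnion fun n => MeasurableSet.iUnion fun _ => hAmeas n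
  have hUlow : ∀ N, c ≤ m (U N) := by
    intro N
    refine le_trans (hAlow (max N (max N₀ 2)) (by omega) (by omega)) (measure_mono ?_)
    intro ω hω
    exact Set.mem_iUnion.mpr ⟨max N (max N₀ 2), Set.mem_iUnion.mpr ⟨by omega, hω⟩⟩
  have hUanti : Antitone U := by
    intro N N' hNN' ω hω
    simp only [hU, Set.mem_iUnion] at hω ⊢
    obtain ⟨n, hn, hx⟩ := hω
    exact ⟨n, le_trans hNN' hn, hx⟩
  have hInter : c ≤ m (⋂ N, U N) := by
    rw [hUanti.measure_iInter
      (fun N => (hUmeas N).nullMeasurableSet)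
      ⟨0, measure_ne_top m _⟩]
    exact le_iInf hUlow
  -- remove the null set
  set bad : Set (FGBoundary (Fin k)) := { ω | ¬ Tendsto
      (fun n : ℕ => (X.dist x (φ (bprefix ω n) x) : ℝ) / n) atTop (𝓝 lam) } with hbad
  have hbad0 : m bad = 0 := by
    rw [hbad]
    exact hlam
  have hgood : c ≤ m ((⋂ N, U N) \ bad) := by
    rw [measure_diff_null hbad0]
    exact hInter
  have hcne : c ≠ 0 := by
    rw [hc]
    simp only [ne_eq, ENNReal.inv_eq_zero]
    exact ENNReal.natCast_ne_top _
  obtain ⟨ω, hωT, hωg⟩ := MeasureTheory.nonempty_of_measure_ne_zero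
    (fun h0 => hcne (le_antisymm (h0 ▸ hgood) zero_le))
  -- ω has infinitely many prefixes in S and good convergence
  have hωtend : Tendsto (fun n : ℕ => (X.dist x (φ (bprefix ω n) x) : ℝ) / n) atTop (𝓝 lam) := by
    by_contra hcon
    exact hωg hcon
  have hfreq : ∃ᶠ n in atTop, bprefix ω n ∈ S := by
    rw [frequently_atTop]
    intro N
    have := Set.mem_iInter.mp hωT N
    obtain ⟨n, hn⟩ := Set.mem_iUnion.mp this
    obtain ⟨hNn, hωn⟩ := Set.mem_iUnion.mp hn
    exact ⟨n, hNn, hωn⟩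
  obtain ⟨ψ, hψmono, hψ⟩ := Filter.extraction_of_frequently_atTop hfreq
  have htend2 : Tendsto (fun j => (X.dist x (φ (bprefix ω (ψ j)) x) : ℝ) / (ψ j)) atTop (𝓝 lam) :=
    hωtend.comp hψmono.tendsto_atTop
  refine ge_of_tendsto htend2 ?_
  rw [eventually_atTop]
  refine ⟨1, fun j hj => ?_⟩
  set n := ψ j with hn
  have hn1 : 1 ≤ n := le_trans hj hψmono.le_apply
  set w := bprefix ω n with hw
  have hwS : w ∈ S := hψ j
  have hwlen : wlen w = n := wlen_bprefix ω n
  have hwCR : wlen w = cyclen w := hSCR hwS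
  have hcyc : cyclen w = n := by omega
  have hr := hratio w hwS
  rw [hcyc] at hr
  have htl : translen X φ w ≤ X.dist x (φ w x) := Nat.sInf_le ⟨x, rfl⟩
  have hnpos : (0 : ℝ) < n := by exact_mod_cast hn1
  calc mu ≤ (translen X φ w : ℝ) / n := hr
  _ ≤ (X.dist x (φ w x) : ℝ) / n := by
      gcongr


end
end

section
/- Let F be the free group of rank k ≥ 2 with free basis A, let φ ∈ Aut(F) be (s,m)-hyperbolic, and let w be a nontrivial conjugacy class (cyclic word) of minimal cyclically reduced length in its ⟨φ⟩-orbit, i.e. ||φ^i(w)|| ≥ ||w|| for all i ∈ ℤ. Then for every integer n ≥ 2, ||φ^{mn}(w)|| ≥ s^{n-1}·||w||. -/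
open MeasureTheory Filter Topology
open scoped ENNReal

noncomputable section

/-!
Sample the orbit every `M` steps: `a n = ‖φ^{Mn}(w)‖`. Hyperbolicity says
`s · a (n+1) ≤ max (a (n+2)) (a n)`. Minimality of `a 0` gives `a 0 ≤ a 1`, and as long as the
sequence is nondecreasing the maximum cannot be attained at `a n` (that would force
`s · a (n+1) ≤ a (n+1)`), so `a` grows by a factor `s` at every step from `n = 1` on.
-/

theorem mul_le_of_mul_le_max_of_le {s x y z : ℝ} (hs : 1 < s) (hz : 0 ≤ z)
    (hxy : x ≤ y) (h : s * y ≤ max z x) : s * y ≤ z := by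
  rcases le_max_iff.mp h with h | h
  · exact h
  · nlinarith

section HyperbolicSequence

variable {a : ℕ → ℝ} {s : ℝ}

theorem le_succ_and_mul_le_of_le_max (hs : 1 < s) (h0 : 0 ≤ a 0) (hmin : ∀ i, a 0 ≤ a i)
    (hstep : ∀ n, s * a (n + 1) ≤ max (a (n + 2)) (a n)) (n : ℕ) :
    a n ≤ a (n + 1) ∧ s * a (n + 1) ≤ a (n + 2) := by
  have hnonneg : ∀ i, 0 ≤ a i := fun i => h0.trans (hmin i)
  induction n with
  | zero =>
    exact ⟨hmin 1, mul_le_of_mul_le_max_of_le hs (hnonneg 2) (hmin 1) (hstep 0)⟩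
  | succ n ih =>
    have hmono : a (n + 1) ≤ a (n + 2) := by nlinarith [hnonneg (n + 1), ih.2]
    exact ⟨hmono, mul_le_of_mul_le_max_of_le hs (hnonneg _) hmono (hstep (n + 1))⟩

theorem pow_mul_le_of_le_max (hs : 1 < s) (h0 : 0 ≤ a 0) (hmin : ∀ i, a 0 ≤ a i)
    (hstep : ∀ n, s * a (n + 1) ≤ max (a (n + 2)) (a n)) (n : ℕ) :
    s ^ n * a 0 ≤ a (n + 1) := by
  induction n with
  | zero => simpa using hmin 1
  | succ n ih =>
    calc s ^ (n + 1) * a 0 = s * (s ^ n * a 0) := by ring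
      _ ≤ s * a (n + 1) := by gcongr
      _ ≤ a (n + 2) := (le_succ_and_mul_le_of_le_max hs h0 hmin hstep n).2

end HyperbolicSequence

theorem MulAut.zpow_apply_zpow_apply {G : Type*} [Group G] (φ : MulAut G) (i j : ℤ) (x : G) :
    (φ ^ i) ((φ ^ j) x) = (φ ^ (i + j)) x := by
  rw [zpow_add]
  rfl

theorem statement15_general {k : ℕ} (φ : MulAut (FreeGroup (Fin k)))
    (s : ℝ) (M : ℕ) (hs : 1 < s)
    (hhyp : ∀ w : FreeGroup (Fin k),
      s * (cyclen w : ℝ) ≤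
        max ((cyclen ((φ ^ (M : ℤ)) w) : ℝ)) ((cyclen ((φ ^ (-(M : ℤ))) w) : ℝ)))
    (w : FreeGroup (Fin k))
    (hmin : ∀ i : ℤ, cyclen w ≤ cyclen ((φ ^ i) w)) :
    ∀ n : ℕ, 2 ≤ n →
      s ^ (n - 1) * (cyclen w : ℝ) ≤ (cyclen ((φ ^ (M * n)) w) : ℝ) := by
  set a : ℕ → ℝ := fun n => cyclen ((φ ^ ((M * n : ℕ) : ℤ)) w) with ha
  have ha0 : a 0 = cyclen w := by simp [ha]
  have hstep : ∀ n, s * a (n + 1) ≤ max (a (n + 2)) (a n) := by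
    intro n
    have h := hhyp ((φ ^ ((M * (n + 1) : ℕ) : ℤ)) w)
    rw [MulAut.zpow_apply_zpow_apply, MulAut.zpow_apply_zpow_apply] at h
    convert h using 6 <;> push_cast <;> ring
  have hgrow := pow_mul_le_of_le_max hs (ha0 ▸ Nat.cast_nonneg _)
    (fun i => ha0 ▸ Nat.cast_le.mpr (hmin _)) hstep
  intro n hn
  obtain ⟨n, rfl⟩ : ∃ j, n = j + 1 := ⟨n - 1, by omega⟩
  simpa only [Nat.add_sub_cancel, ← ha0, ha, zpow_natCast] using hgrow n

/-- growth of cyclic lengths under iteration of an `(s,m)`-hyperbolic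
automorphism, for an element of minimal cyclic length in its `⟨φ⟩`-orbit. -/
theorem statement15 {k : ℕ} (hk : 2 ≤ k) (φ : MulAut (FreeGroup (Fin k)))
    (s : ℝ) (M : ℕ) (hs : 1 < s) (hM : 1 ≤ M)
    (hhyp : ∀ w : FreeGroup (Fin k),
      s * (cyclen w : ℝ) ≤
        max ((cyclen ((φ ^ (M : ℤ)) w) : ℝ)) ((cyclen ((φ ^ (-(M : ℤ))) w) : ℝ)))
    (w : FreeGroup (Fin k))
    (hmin : ∀ i : ℤ, cyclen w ≤ cyclen ((φ ^ i) w)) :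
    ∀ n : ℕ, 2 ≤ n →
      s ^ (n - 1) * (cyclen w : ℝ) ≤ (cyclen ((φ ^ (M * n)) w) : ℝ) :=
  statement15_general φ s M hs hhyp w hmin

end
end
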